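/- Let ℓ be a prime, k a field of characteristic ℓ or 0, V a finite-dimensional k-vector space, and Π a group acting on V. Suppose A ⊆ V is a Π-submodule of dimension a such that the inclusion Λ^a A ↪ Λ^a V admits a Π-equivariant splitting s : Λ^a V → Λ^a A. Then the inclusion A ↪ V admits a Π-equivariant splitting, given by composing v ↦ (v ∧ −) ∈ Hom(Λ^{a−1}V, Λ^a V), restriction along Λ^{a−1}A ↪ Λ^{a−1}V, postcomposition with s, and the inverse of the isomorphism A ≅ Hom(Λ^{a−1}A, Λ^a A). -/

import Mathlib

/-!
For `v ∈ V` the map `ω ↦ s (v ∧ ω)` is an element of `Hom(Λ^{a-1} A, Λ^a A)`. Since `Λ^a A` is a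
line, `v ↦ (v ∧ -)` identifies `A` with this space of homomorphisms: it is injective, because
wedging with the `(a-1)`-fold products of basis vectors reads off the coordinates of `v`, and both
sides have dimension `a`. Transporting back gives a linear map `V → A`. It restricts to the
identity on `A` because `s` splits `Λ^a A ↪ Λ^a V`, and it is `Π`-equivariant because every map in
the construction is natural and `Λ^{a-1}` of the action on `A` is surjective.
-/

section ExtPower

variable {R : Type*} [CommRing R] {M N : Type*} [AddCommGroup M] [Module R M]
  [AddCommGroup N] [Module R N]

lemma epower_map_mem (f : M →ₗ[R] N) (n : ℕ) {x : ExteriorAlgebra R M}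
    (hx : x ∈ ⋀[R]^n M) : ExteriorAlgebra.map f x ∈ ⋀[R]^n N := by
  rw [← ExteriorAlgebra.ιMulti_span_fixedDegree] at hx ⊢
  induction hx using Submodule.span_induction with
  | mem y hy =>
      obtain ⟨m, rfl⟩ := hy
      rw [ExteriorAlgebra.map_apply_ιMulti]
      exact Submodule.subset_span ⟨_, rfl⟩
  | zero => simp
  | add x y _ _ hx hy => rw [map_add]; exact add_mem hx hy
  | smul c x _ hx => rw [map_smul]; exact Submodule.smul_mem _ _ hx

/-- The functorial map `Λ^n f : Λ^n M → Λ^n N` induced on `n`-th exterior powers by a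
linear map `f : M → N`. -/
noncomputable def epMap (f : M →ₗ[R] N) (n : ℕ) : ⋀[R]^n M →ₗ[R] ⋀[R]^n N :=
  (ExteriorAlgebra.map f).toLinearMap.restrict fun _ hx => epower_map_mem f n hx

end ExtPower

lemma epMap_eq_map {R : Type*} [CommRing R] {M N : Type*} [AddCommGroup M] [Module R M]
    [AddCommGroup N] [Module R N] (f : M →ₗ[R] N) (n : ℕ) :
    epMap f n = exteriorPower.map n f := by
  refine exteriorPower.linearMap_ext (AlternatingMap.ext fun m => Subtype.ext ?_)
  rw [LinearMap.compAlternatingMap_apply, LinearMap.compAlternatingMap_apply,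
    exteriorPower.map_apply_ιMulti]
  exact ExteriorAlgebra.map_apply_ιMulti f m

namespace exteriorPower

open ExteriorAlgebra (ι)

section CommRing

variable {R : Type*} [CommRing R] {M N : Type*} [AddCommGroup M] [Module R M]
  [AddCommGroup N] [Module R N] {n : ℕ}

lemma ι_mul_mem (v : M) {x : ExteriorAlgebra R M} (hx : x ∈ ⋀[R]^n M) :
    ι R v * x ∈ ⋀[R]^(n + 1) M := by
  rw [ExteriorAlgebra.exteriorPower, pow_succ']
  exact Submodule.mul_mem_mul (LinearMap.mem_range_self _ v) hx

variable (R M n) in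
noncomputable def wedgeLeft : M →ₗ[R] ⋀[R]^n M →ₗ[R] ⋀[R]^(n + 1) M :=
  LinearMap.codRestrict₂ (((LinearMap.mul R _).comp (ι R)).compl₂ (⋀[R]^n M).subtype)
    (⋀[R]^(n + 1) M).subtype Subtype.val_injective
    fun v x => by simpa using ι_mul_mem v x.2

@[simp] lemma coe_wedgeLeft (v : M) (x : ⋀[R]^n M) :
    (wedgeLeft R M n v x : ExteriorAlgebra R M) = ι R v * x :=
  LinearMap.codRestrict₂_apply _ (⋀[R]^(n + 1) M).subtype _ _ v x

lemma wedgeLeft_ιMulti (v : M) (m : Fin n → M) :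
    wedgeLeft R M n v (ιMulti R n m) = ιMulti R (n + 1) (Fin.cons v m) :=
  Subtype.ext <| by simp [ExteriorAlgebra.ιMulti_succ_apply, Matrix.vecTail]

lemma map_comp_wedgeLeft (f : M →ₗ[R] N) (v : M) :
    map (n + 1) f ∘ₗ wedgeLeft R M n v = wedgeLeft R N n (f v) ∘ₗ map n f :=
  linearMap_ext <| AlternatingMap.ext fun m => by
    simp [wedgeLeft_ιMulti, Fin.comp_cons]

lemma wedgeLeft_ιMulti_succAbove (b : Module.Basis (Fin (n + 1)) R M) (v : M)
    (i : Fin (n + 1)) :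
    wedgeLeft R M n v (ιMulti R n (b ∘ i.succAbove)) =
      b.repr v i • ιMulti R (n + 1) (Fin.cons (b i) (b ∘ i.succAbove)) := by
  conv_lhs => rw [← b.sum_repr v]
  rw [map_sum, LinearMap.sum_apply, Finset.sum_eq_single i]
  · rw [map_smul, LinearMap.smul_apply, wedgeLeft_ιMulti]
  · intro j _ hj
    obtain ⟨l, rfl⟩ := Fin.exists_succAbove_eq hj
    rw [map_smul, LinearMap.smul_apply, wedgeLeft_ιMulti,
      (ιMulti R (n + 1)).map_eq_zero_of_eq _ (i := 0) (j := l.succ) (by simp)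
        (Fin.succ_ne_zero l).symm, smul_zero]
  · simp

end CommRing

section Nontrivial

variable {R : Type*} [CommRing R] [Nontrivial R] {M : Type*} [AddCommGroup M] [Module R M]
  {n : ℕ}

lemma ιMulti_basis_ne_zero (b : Module.Basis (Fin n) R M) : ιMulti R n b ≠ 0 := fun h => by
  have hdet := alternatingMapLinearEquiv_apply_ιMulti b.det b
  rw [h, map_zero, b.det_self] at hdet
  exact zero_ne_one hdet

lemma ιMulti_cons_succAbove_ne_zero (b : Module.Basis (Fin (n + 1)) R M) (i : Fin (n + 1)) :
    ιMulti R (n + 1) (Fin.cons (b i) (b ∘ i.succAbove)) ≠ 0 := by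
  have hinj : Function.Injective (Fin.cons i i.succAbove : Fin (n + 1) → Fin (n + 1)) :=
    Fin.cons_injective_iff.2 ⟨fun ⟨l, hl⟩ => Fin.succAbove_ne i l hl,
      Fin.succAbove_right_injective⟩
  let e := Equiv.ofBijective _ (Finite.injective_iff_bijective.1 hinj)
  have hb : Fin.cons (b i) (b ∘ i.succAbove) = ⇑(b.reindex e.symm) := by
    rw [Module.Basis.coe_reindex, Equiv.symm_symm]
    exact (Fin.comp_cons b i i.succAbove).symm
  rw [hb]
  exact ιMulti_basis_ne_zero _

end Nontrivial

section Field

variable {K : Type*} [Field K] {M : Type*} [AddCommGroup M] [Module K M] {n : ℕ}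

lemma wedgeLeft_injective (hM : Module.finrank K M = n + 1) :
    Function.Injective (wedgeLeft K M n) := by
  have : Module.Finite K M := Module.finite_of_finrank_eq_succ hM
  let b := Module.finBasisOfFinrankEq K M hM
  refine (injective_iff_map_eq_zero _).2 fun v hv => b.ext_elem fun i => ?_
  have h := wedgeLeft_ιMulti_succAbove b v i
  rw [hv, LinearMap.zero_apply, eq_comm, smul_eq_zero] at h
  simpa using h.resolve_right (ιMulti_cons_succAbove_ne_zero b i)

variable [FiniteDimensional K M]

noncomputable def wedgeLeftEquiv (hM : Module.finrank K M = n + 1) :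
    M ≃ₗ[K] (⋀[K]^n M →ₗ[K] ⋀[K]^(n + 1) M) :=
  have hdim : Module.finrank K M = Module.finrank K (⋀[K]^n M →ₗ[K] ⋀[K]^(n + 1) M) := by
    rw [Module.finrank_linearMap, finrank_eq, finrank_eq, hM, Nat.choose_succ_self_right,
      Nat.choose_self, mul_one]
  LinearMap.linearEquivOfInjective (V₂ := ⋀[K]^n M →ₗ[K] ⋀[K]^(n + 1) M) (wedgeLeft K M n)
    (wedgeLeft_injective hM) hdim

@[simp] lemma wedgeLeftEquiv_apply (hM : Module.finrank K M = n + 1) (v : M) :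
    wedgeLeftEquiv hM v = wedgeLeft K M n v :=
  rfl

end Field

section Splitting

variable {R : Type*} [CommRing R] {V : Type*} [AddCommGroup V] [Module R V]
  (A : Submodule R V) {n : ℕ} {s : ⋀[R]^(n + 1) V →ₗ[R] ⋀[R]^(n + 1) A}

variable (s) in
noncomputable def restrictedWedge : V →ₗ[R] ⋀[R]^n A →ₗ[R] ⋀[R]^(n + 1) A :=
  (LinearMap.llcomp R _ _ _ s ∘ₗ LinearMap.lcomp R _ (map n A.subtype)) ∘ₗ wedgeLeft R V n

lemma restrictedWedge_apply (v : V) :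
    restrictedWedge A s v = s ∘ₗ wedgeLeft R V n v ∘ₗ map n A.subtype :=
  rfl

lemma restrictedWedge_coe (hs : s ∘ₗ map (n + 1) A.subtype = LinearMap.id) (y : A) :
    restrictedWedge A s y = wedgeLeft R A n y := by
  rw [restrictedWedge_apply, ← A.subtype_apply y, ← map_comp_wedgeLeft, ← LinearMap.comp_assoc,
    hs, LinearMap.id_comp]

lemma restrictedWedge_comp_map {f : V →ₗ[R] V} (hf : ∀ x ∈ A, f x ∈ A)
    (hfs : s ∘ₗ map (n + 1) f = map (n + 1) (f.restrict hf) ∘ₗ s) (v : V) :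
    restrictedWedge A s (f v) ∘ₗ map n (f.restrict hf) =
      map (n + 1) (f.restrict hf) ∘ₗ restrictedWedge A s v := by
  have hsub : A.subtype ∘ₗ f.restrict hf = f ∘ₗ A.subtype := rfl
  simp only [restrictedWedge_apply, LinearMap.comp_assoc, ← map_comp, hsub]
  rw [map_comp, ← LinearMap.comp_assoc (map n A.subtype) (map n f), ← map_comp_wedgeLeft]
  simp only [← LinearMap.comp_assoc, hfs]

end Splitting

section Retraction

variable {K : Type*} [Field K] {V : Type*} [AddCommGroup V] [Module K V]
  {A : Submodule K V} [FiniteDimensional K A] {n : ℕ}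
  {s : ⋀[K]^(n + 1) V →ₗ[K] ⋀[K]^(n + 1) A}

variable (s) in
noncomputable def retractionOfSplitting (hA : Module.finrank K A = n + 1) : V →ₗ[K] A :=
  (wedgeLeftEquiv hA).symm.toLinearMap ∘ₗ restrictedWedge A s

lemma retractionOfSplitting_apply_coe (hA : Module.finrank K A = n + 1)
    (hs : s ∘ₗ map (n + 1) A.subtype = LinearMap.id) (y : A) :
    retractionOfSplitting s hA y = y := by
  rw [retractionOfSplitting, LinearMap.comp_apply, restrictedWedge_coe A hs,
    ← wedgeLeftEquiv_apply hA, LinearEquiv.coe_coe, LinearEquiv.symm_apply_apply]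

lemma retractionOfSplitting_map (hA : Module.finrank K A = n + 1) {f : V →ₗ[K] V}
    (hf : ∀ x ∈ A, f x ∈ A) (hsurj : Function.Surjective (f.restrict hf))
    (hfs : s ∘ₗ map (n + 1) f = map (n + 1) (f.restrict hf) ∘ₗ s) (v : V) :
    retractionOfSplitting s hA (f v) = f.restrict hf (retractionOfSplitting s hA v) := by
  have hp (w : V) : wedgeLeft K A n (retractionOfSplitting s hA w) = restrictedWedge A s w :=
    (wedgeLeftEquiv hA).apply_symm_apply _
  apply wedgeLeft_injective hA
  rw [hp, ← LinearMap.cancel_right (map_surjective hsurj), restrictedWedge_comp_map A hf hfs,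
    ← hp, map_comp_wedgeLeft]

end Retraction

end exteriorPower

theorem stmt_7_general (k : Type) [Field k]
    (V : Type) [AddCommGroup V] [Module k V] [FiniteDimensional k V]
    (G : Type) [Group G] (ρ : Representation k G V)
    (A : Submodule k V) (a : ℕ) (ha : Module.finrank k A = a)
    (hstab : ∀ g : G, ∀ x ∈ A, ρ g x ∈ A)
    (s : ⋀[k]^a V →ₗ[k] ⋀[k]^a (↥A))
    (hsplit : ∀ x : ⋀[k]^a (↥A), s (epMap (A.subtype) a x) = x)
    (hequiv : ∀ (g : G) (x : ⋀[k]^a V),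
      s (epMap (ρ g) a x) = epMap ((ρ g).restrict (hstab g)) a (s x)) :
    ∃ p : V →ₗ[k] A,
      (∀ y : A, p (y : V) = y) ∧
      (∀ (g : G) (v : V), p (ρ g v) = (ρ g).restrict (hstab g) (p v)) := by
  simp only [epMap_eq_map] at hsplit hequiv
  cases a with
  | zero =>
    have : Subsingleton A := Module.finrank_zero_iff.mp ha
    exact ⟨0, fun _ => Subsingleton.elim _ _, fun _ _ => Subsingleton.elim _ _⟩
  | succ n =>
    have hsurj (g : G) : Function.Surjective ((ρ g).restrict (hstab g)) := fun y =>
      ⟨(ρ g⁻¹).restrict (hstab g⁻¹) y, Subtype.ext (ρ.self_inv_apply g y)⟩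
    exact ⟨exteriorPower.retractionOfSplitting s ha,
      exteriorPower.retractionOfSplitting_apply_coe ha (LinearMap.ext hsplit),
      fun g => exteriorPower.retractionOfSplitting_map ha (hstab g) (hsurj g)
        (LinearMap.ext (hequiv g))⟩

/-- Let `ℓ` be a prime, `k` a field of characteristic `ℓ` or `0`, `V` a
finite-dimensional `k`-vector space with an action `ρ` of a group `Π` (here `G`), and
`A ⊆ V` a `Π`-stable subspace of dimension `a`.  If the inclusion `Λ^a A ↪ Λ^a V` admits a
`Π`-equivariant splitting `s : Λ^a V → Λ^a A`, then the inclusion `A ↪ V` admits a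
`Π`-equivariant splitting `V → A`. -/
theorem stmt_7 (ℓ : ℕ) [Fact ℓ.Prime] (k : Type) [Field k]
    (hchar : CharP k ℓ ∨ CharP k 0)
    (V : Type) [AddCommGroup V] [Module k V] [FiniteDimensional k V]
    (G : Type) [Group G] (ρ : Representation k G V)
    (A : Submodule k V) (a : ℕ) (ha : Module.finrank k A = a)
    (hstab : ∀ g : G, ∀ x ∈ A, ρ g x ∈ A)
    (s : ⋀[k]^a V →ₗ[k] ⋀[k]^a (↥A))
    (hsplit : ∀ x : ⋀[k]^a (↥A), s (epMap (A.subtype) a x) = x)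
    (hequiv : ∀ (g : G) (x : ⋀[k]^a V),
      s (epMap (ρ g) a x) = epMap ((ρ g).restrict (hstab g)) a (s x)) :
    ∃ p : V →ₗ[k] A,
      (∀ y : A, p (y : V) = y) ∧
      (∀ (g : G) (v : V), p (ρ g v) = (ρ g).restrict (hstab g) (p v)) :=
  stmt_7_general k V G ρ A a ha hstab s hsplit hequiv
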